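/- For any x ∈ Tₙ and y ∈ −Tₙ, where Tₙ = {x ∈ ℝⁿ : x₁ > 1/2, ‖x - a·e₁‖ < 1/2, ‖x‖ < 1} with a = (1 + √10)/6, the Euclidean distance ‖x − y‖ is strictly greater than 1. -/
import Mathlib


open MeasureTheory Metric

noncomputable def a : ℝ := (1 + Real.sqrt 10) / 6

noncomputable def T (n : ℕ) (hn : 0 < n) : Set (EuclideanSpace ℝ (Fin n)) :=
  {x | x ⟨0, hn⟩ > 1/2 ∧ ‖x - a • EuclideanSpace.single (⟨0, hn⟩ : Fin n) (1 : ℝ)‖ < 1/2 ∧ ‖x‖ < 1}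

lemma coord_le_norm {n : ℕ} (v : EuclideanSpace ℝ (Fin n)) (i : Fin n) : |v i| ≤ ‖v‖ := by
  have := EuclideanSpace.norm_eq v
  have h : |v i| = Real.sqrt ((v i)^2) := by
    rw [Real.sqrt_sq_eq_abs]
  rw [h, this]
  apply Real.sqrt_le_sqrt
  rw [← Finset.sum_filter_add_sum_filter_not Finset.univ (· = i)]
  have heq : ∑ j ∈ Finset.univ.filter (· = i), ‖v j‖^2 = ‖v i‖^2 := by
    simp [Finset.filter_eq']
  simp only [Real.norm_eq_abs, sq_abs] at heq ⊢
  rw [heq]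
  nlinarith [Finset.sum_nonneg (fun j (_ : j ∈ Finset.univ.filter (¬ · = i)) => sq_nonneg (v j))]

theorem stmt_3 (n : ℕ) (hn : 0 < n) :
    ∀ x ∈ T n hn, ∀ y ∈ -(T n hn), ‖x - y‖ > 1 := by
  intro x hx y hy
  rw [Set.mem_neg] at hy
  have h1 : x ⟨0, hn⟩ > 1/2 := hx.1
  have h2 : (-y) ⟨0, hn⟩ > 1/2 := hy.1
  have h3 : (x - y) ⟨0, hn⟩ > 1 := by
    have : (x - y) ⟨0, hn⟩ = x ⟨0, hn⟩ + (-y) ⟨0, hn⟩ := by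
      simp [sub_eq_add_neg]
    rw [this]; linarith
  calc 1 < (x - y) ⟨0, hn⟩ := h3
    _ ≤ |(x - y) ⟨0, hn⟩| := le_abs_self _
    _ ≤ ‖x - y‖ := coord_le_norm _ _
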